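/- arXiv:1907.01883 — 2 statements merged into one kernel-verified Lean document; each statement's English description precedes it below -/
import Mathlib

section
/- Let H be a real Hilbert space and B : H × H → ℝ a map (nonlinear in its first argument, linear in its second) such that there exist constants Λ ≥ λ > 0 with |B(v₁,ψ) − B(v₂,ψ)| ≤ Λ ‖v₁ − v₂‖ ‖ψ‖ and B(v,v−ψ) − B(ψ,v−ψ) ≥ λ ‖v − ψ‖² for all v, v₁, v₂, ψ ∈ H. Then for every bounded linear functional F on H there exists a unique u ∈ H with B(u,v) = F(v) for all v ∈ H. -/
/-!
Transport `B` to the operator `g v := R (B v)` on `H`, where `R` is the inverse Riesz isometry;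
then `g` is `Λ`-Lipschitz and `λ`-strongly monotone, and `B u = F` means `g u = R F`.
For `ρ = λ / Λ²` the map `v ↦ v - ρ (g v - R F)` is a contraction with constant
`√(1 - λ² / Λ²)` (Zarantonello), and its fixed point solves the equation.
Uniqueness is immediate from strong monotonicity.
-/

open RealInnerProductSpace

section StronglyMonotone

variable {H : Type*} [NormedAddCommGroup H] [InnerProductSpace ℝ H]

theorem norm_sub_smul_sq_le {x y : H} {lam Λ ρ : ℝ} (hρ : 0 ≤ ρ) (hy : ‖y‖ ≤ Λ * ‖x‖)
    (hxy : lam * ‖x‖ ^ 2 ≤ ⟪y, x⟫) :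
    ‖x - ρ • y‖ ^ 2 ≤ (1 - 2 * ρ * lam + ρ ^ 2 * Λ ^ 2) * ‖x‖ ^ 2 := by
  have hy2 : ‖y‖ ^ 2 ≤ (Λ * ‖x‖) ^ 2 := pow_le_pow_left₀ (norm_nonneg y) hy 2
  rw [norm_sub_sq_real, real_inner_smul_right, real_inner_comm, norm_smul,
    Real.norm_of_nonneg hρ]
  nlinarith [mul_le_mul_of_nonneg_left hxy hρ, mul_le_mul_of_nonneg_left hy2 (sq_nonneg ρ)]

theorem injective_of_strongly_monotone {g : H → H} {lam : ℝ} (hlam : 0 < lam)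
    (hmono : ∀ v w, lam * ‖v - w‖ ^ 2 ≤ ⟪g v - g w, v - w⟫) : Function.Injective g := by
  intro v w hvw
  have h := hmono v w
  rw [hvw, sub_self, inner_zero_left] at h
  have : ‖v - w‖ ^ 2 ≤ 0 := nonpos_of_mul_nonpos_right h hlam
  exact sub_eq_zero.mp (norm_eq_zero.mp (pow_eq_zero_iff two_ne_zero |>.mp
    (le_antisymm this (sq_nonneg _))))

theorem surjective_of_lipschitz_of_strongly_monotone [CompleteSpace H] {g : H → H} {K : NNReal}
    {lam : ℝ} (hlam : 0 < lam) (hg : LipschitzWith K g)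
    (hmono : ∀ v w, lam * ‖v - w‖ ^ 2 ≤ ⟪g v - g w, v - w⟫) : Function.Surjective g := by
  intro f
  -- `max K λ` rather than `K`, so that `Λ > 0` and `ρ = λ / Λ²` is not a junk division.
  set Λ : ℝ := max K lam
  have hΛ : 0 < Λ := lt_max_of_lt_right hlam
  have hgΛ : ∀ v w, ‖g v - g w‖ ≤ Λ * ‖v - w‖ := fun v w => by
    simpa only [dist_eq_norm] using
      (hg.dist_le_mul v w).trans (mul_le_mul_of_nonneg_right (le_max_left _ _) dist_nonneg)
  set ρ := lam / Λ ^ 2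
  set k := 1 - lam ^ 2 / Λ ^ 2
  have hk : 1 - 2 * ρ * lam + ρ ^ 2 * Λ ^ 2 = k := by simp only [ρ, k]; field_simp; ring
  set T : H → H := fun v => v - ρ • (g v - f)
  have hT : LipschitzWith ⟨√k, Real.sqrt_nonneg k⟩ T := by
    refine LipschitzWith.of_dist_le_mul fun v w => ?_
    have hsq : ‖T v - T w‖ ^ 2 ≤ k * ‖v - w‖ ^ 2 := by
      have hTvw : T v - T w = (v - w) - ρ • (g v - g w) := by
        simp only [T, smul_sub]; abel
      rw [hTvw, ← hk]
      exact norm_sub_smul_sq_le (by positivity) (hgΛ v w) (hmono v w)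
    have := Real.sqrt_le_sqrt hsq
    rwa [Real.sqrt_sq (norm_nonneg _), Real.sqrt_mul' k (sq_nonneg _),
      Real.sqrt_sq (norm_nonneg _), ← dist_eq_norm, ← dist_eq_norm] at this
  have hk1 : (⟨√k, Real.sqrt_nonneg k⟩ : NNReal) < 1 := by
    have : 0 < lam ^ 2 / Λ ^ 2 := by positivity
    exact show √k < 1 from (Real.sqrt_lt' one_pos).mpr (by linarith)
  obtain ⟨u, hu, -⟩ := ContractingWith.exists_fixedPoint ⟨hk1, hT⟩ 0 (edist_ne_top _ _)
  have hρ : ρ • (g u - f) = 0 := sub_eq_self.mp hu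
  exact ⟨u, sub_eq_zero.mp ((smul_eq_zero.mp hρ).resolve_left (by positivity))⟩

end StronglyMonotone

/-- Browder–Minty / Zarantonello: a strongly monotone, Lipschitz continuous
(nonlinear in the first argument, linear-continuous in the second) form on a real
Hilbert space admits a unique solution of `B u v = F v` for every bounded linear
functional `F`. -/
theorem stmt0
    {H : Type*} [NormedAddCommGroup H] [InnerProductSpace ℝ H] [CompleteSpace H]
    (B : H → H →L[ℝ] ℝ) (Λ lam : ℝ) (hlam : 0 < lam) (hΛ : lam ≤ Λ)
    (hLip : ∀ v₁ v₂ ψ : H, |B v₁ ψ - B v₂ ψ| ≤ Λ * ‖v₁ - v₂‖ * ‖ψ‖)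
    (hMono : ∀ v ψ : H, lam * ‖v - ψ‖ ^ 2 ≤ B v (v - ψ) - B ψ (v - ψ))
    (F : H →L[ℝ] ℝ) :
    ∃! u : H, ∀ v : H, B u v = F v := by
  set R := (InnerProductSpace.toDual ℝ H).symm
  set g : H → H := fun v => R (B v)
  have hg_inner : ∀ v x, ⟪g v, x⟫ = B v x := fun v x => InnerProductSpace.toDual_symm_apply
  have hg_lip : LipschitzWith (Real.toNNReal Λ) g := LipschitzWith.of_dist_le' fun v w => by
    rw [dist_eq_norm, dist_eq_norm, ← map_sub, LinearIsometryEquiv.norm_map]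
    refine ContinuousLinearMap.opNorm_le_bound _ (mul_nonneg (hlam.le.trans hΛ) (norm_nonneg _)) fun ψ => ?_
    simpa only [mul_assoc, sub_apply, Real.norm_eq_abs] using hLip v w ψ
  have hg_mono : ∀ v w, lam * ‖v - w‖ ^ 2 ≤ ⟪g v - g w, v - w⟫ := fun v w => by
    rw [inner_sub_left, hg_inner, hg_inner]
    exact hMono v w
  have hg_bij : Function.Bijective g := ⟨injective_of_strongly_monotone hlam hg_mono,
    surjective_of_lipschitz_of_strongly_monotone hlam hg_lip hg_mono⟩
  have hsolves : ∀ u, (∀ v, B u v = F v) ↔ g u = R F := fun u => by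
    rw [R.injective.eq_iff, ContinuousLinearMap.ext_iff]
  simpa only [hsolves] using hg_bij.existsUnique (R F)
end

section
/- Newton-type linearization error estimate: Under the hypotheses of the previous Taylor identity, set A_L(x,∇u*,∇v) := A(x,∇u*) + D_ξ A(x,∇u*)∇(v − u*). Then for any v ∈ H¹₀(Ω) ∩ W^{1,∞}(Ω) with u* ∈ H¹₀(Ω) ∩ W^{1,∞}(Ω), η_lin(v) := sup_{w ∈ W, |w|₁=1} |∫_Ω [A(x,∇v) − A_L(x,∇u*,∇v)]·∇w dx| ≤ L_A ‖∇(v − u*)‖_{L^∞(Ω)} |v − u*|₁. -/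
/-!
Pointwise, the linearization error `A(∇v) - A(∇u*) - D_ξA(∇u*)∇(v - u*)` is a first-order
Taylor remainder; since `D_ξA` is `L_A`-Lipschitz, the mean value inequality bounds it by
`L_A |∇(v - u*)|²`, hence by `L_A ‖∇(v - u*)‖_∞ |∇(v - u*)|`. Testing against `∇w` and
applying Cauchy–Schwarz in `L²` gives the estimate.
-/

open MeasureTheory

section TaylorRemainder

variable {E F : Type*} [NormedAddCommGroup E] [NormedSpace ℝ E]

theorem norm_sub_sub_fderiv_le_mul_sq [NormedAddCommGroup F] [NormedSpace ℝ F] {f : E → F}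
    (hf : Differentiable ℝ f) {L : ℝ}
    (hL : ∀ ξ₁ ξ₂ : E, ‖fderiv ℝ f ξ₁ - fderiv ℝ f ξ₂‖ ≤ L * ‖ξ₁ - ξ₂‖) (a b : E) :
    ‖f b - f a - fderiv ℝ f a (b - a)‖ ≤ L * ‖b - a‖ ^ 2 := by
  have hLba : 0 ≤ L * ‖b - a‖ := (norm_nonneg _).trans (hL b a)
  have bound : ∀ x ∈ segment ℝ a b, ‖fderiv ℝ f x - fderiv ℝ f a‖ ≤ L * ‖b - a‖ := by
    intro x hx
    obtain ⟨t, ⟨ht0, ht1⟩, rfl⟩ := (segment_eq_image' ℝ a b ▸ hx :)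
    calc ‖fderiv ℝ f (a + t • (b - a)) - fderiv ℝ f a‖ ≤ L * ‖a + t • (b - a) - a‖ := hL _ _
      _ = t * (L * ‖b - a‖) := by
        rw [add_sub_cancel_left, norm_smul, Real.norm_of_nonneg ht0]; ring
      _ ≤ L * ‖b - a‖ := mul_le_of_le_one_left hLba ht1
  have := (convex_segment a b).norm_image_sub_le_of_norm_fderiv_le' (fun x _ => hf x) bound
    (left_mem_segment ℝ a b) (right_mem_segment ℝ a b)
  rwa [mul_assoc, ← sq] at this

theorem abs_inner_sub_add_fderiv_le [NormedAddCommGroup F] [InnerProductSpace ℝ F] {f : E → F}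
    (hf : Differentiable ℝ f) {L : ℝ}
    (hL : ∀ ξ₁ ξ₂ : E, ‖fderiv ℝ f ξ₁ - fderiv ℝ f ξ₂‖ ≤ L * ‖ξ₁ - ξ₂‖) {a b : E} {M : ℝ}
    (hM : ‖b - a‖ ≤ M) (w : F) :
    |inner ℝ (f b - (f a + fderiv ℝ f a (b - a))) w| ≤ L * M * (‖b - a‖ * ‖w‖) := by
  have hLba : 0 ≤ L * ‖b - a‖ := (norm_nonneg _).trans (hL b a)
  calc |inner ℝ (f b - (f a + fderiv ℝ f a (b - a))) w|
      ≤ ‖f b - f a - fderiv ℝ f a (b - a)‖ * ‖w‖ := by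
        rw [← sub_sub]; exact abs_real_inner_le_norm _ _
    _ ≤ L * ‖b - a‖ ^ 2 * ‖w‖ := by gcongr; exact norm_sub_sub_fderiv_le_mul_sq hf hL a b
    _ = (L * ‖b - a‖) * (‖b - a‖ * ‖w‖) := by ring
    _ ≤ (L * ‖b - a‖) * (M * ‖w‖) := by gcongr
    _ = L * M * (‖b - a‖ * ‖w‖) := by ring

end TaylorRemainder

theorem integral_norm_mul_norm_le_sqrt_mul_sqrt {α E : Type*} [MeasurableSpace α]
    {μ : Measure α} [NormedAddCommGroup E] {f g : α → E} (hf : MemLp f 2 μ) (hg : MemLp g 2 μ) :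
    ∫ x, ‖f x‖ * ‖g x‖ ∂μ ≤ √(∫ x, ‖f x‖ ^ 2 ∂μ) * √(∫ x, ‖g x‖ ^ 2 ∂μ) := by
  have := integral_mul_norm_le_Lp_mul_Lq Real.HolderConjugate.two_two
    (by rwa [ENNReal.ofReal_ofNat] : MemLp f (ENNReal.ofReal 2) μ)
    (by rwa [ENNReal.ofReal_ofNat] : MemLp g (ENNReal.ofReal 2) μ)
  simpa only [Real.rpow_two, ← Real.sqrt_eq_rpow] using this

/-- `gv`, `gu`, `w` stand for `∇v`, `∇u*`, `∇w`; `‖∇(v - u*)‖_{L∞}` is replaced by an a.e.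
bound `M`, and `|·|₁` by the `L²` norm of the gradient. -/
theorem stmt8_general
    {d : ℕ} {Ω : Type*} [MeasurableSpace Ω] (μ : Measure Ω)
    (A : Ω → EuclideanSpace ℝ (Fin d) → EuclideanSpace ℝ (Fin d))
    (LA : ℝ)
    (hA : ∀ᵐ x ∂μ, ContDiff ℝ 1 (A x))
    (hLip : ∀ᵐ x ∂μ, ∀ ξ₁ ξ₂ : EuclideanSpace ℝ (Fin d),
      ‖fderiv ℝ (A x) ξ₁ - fderiv ℝ (A x) ξ₂‖ ≤ LA * ‖ξ₁ - ξ₂‖)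
    (gv gu w : Ω → EuclideanSpace ℝ (Fin d))
    (hgv : MemLp gv 2 μ) (hgu : MemLp gu 2 μ) (hw : MemLp w 2 μ)
    (M : ℝ) (hM : ∀ᵐ x ∂μ, ‖gv x - gu x‖ ≤ M) :
    |∫ x, (inner ℝ (A x (gv x) - (A x (gu x) + fderiv ℝ (A x) (gu x) (gv x - gu x)))
        (w x) : ℝ) ∂μ|
      ≤ LA * M * Real.sqrt (∫ x, ‖gv x - gu x‖ ^ 2 ∂μ)
          * Real.sqrt (∫ x, ‖w x‖ ^ 2 ∂μ) := by
  by_cases hvu : ∀ᵐ x ∂μ, gv x = gu x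
  · rw [integral_eq_zero_of_ae, integral_eq_zero_of_ae (f := fun x => ‖gv x - gu x‖ ^ 2)]
    · simp
    all_goals filter_upwards [hvu] with x hx; simp [hx]
  obtain ⟨x₀, hne, hLx₀, hMx₀⟩ :=
    ((Filter.not_eventually.mp hvu).and_eventually (hLip.and hM)).exists
  have hdiff_pos : 0 < ‖gv x₀ - gu x₀‖ := norm_pos_iff.mpr (sub_ne_zero.mpr hne)
  have hLA : 0 ≤ LA :=
    (mul_nonneg_iff_of_pos_right hdiff_pos).mp ((norm_nonneg _).trans (hLx₀ _ _))
  have hM0 : 0 ≤ M := (norm_nonneg _).trans hMx₀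
  have hprod : Integrable (fun x => ‖gv x - gu x‖ * ‖w x‖) μ :=
    (hgv.sub hgu).norm.integrable_mul hw.norm
  rw [← Real.norm_eq_abs]
  calc _ ≤ ∫ x, LA * M * (‖gv x - gu x‖ * ‖w x‖) ∂μ := by
        refine norm_integral_le_of_norm_le (hprod.const_mul _) ?_
        filter_upwards [hA, hLip, hM] with x hAx hLx hMx
        exact abs_inner_sub_add_fderiv_le (hAx.differentiable one_ne_zero) hLx hMx (w x)
    _ = LA * M * ∫ x, ‖gv x - gu x‖ * ‖w x‖ ∂μ := integral_const_mul _ _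
    _ ≤ _ := by
        rw [mul_assoc _ √_]
        gcongr
        exact integral_norm_mul_norm_le_sqrt_mul_sqrt (hgv.sub hgu) hw

/-- Newton-type linearization error estimate (Lemma 4.4): with
`A_L(x,∇u*,∇v) = A(x,∇u*) + D_ξA(x,∇u*)∇(v - u*)` and `D_ξA` Lipschitz with
constant `L_A`, the linearization error tested against `w` is bounded by
`L_A ‖∇(v - u*)‖_{L∞} |v - u*|₁ ‖w‖`; the `L∞`-norm is expressed through any
a.e. bound `M` on `‖∇(v - u*)‖`. -/
theorem stmt8
    {d : ℕ} {Ω : Type*} [MeasurableSpace Ω] (μ : Measure Ω)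
    (A : Ω → EuclideanSpace ℝ (Fin d) → EuclideanSpace ℝ (Fin d))
    (LA : ℝ)
    (hA : ∀ᵐ x ∂μ, ContDiff ℝ 1 (A x))
    (hLip : ∀ᵐ x ∂μ, ∀ ξ₁ ξ₂ : EuclideanSpace ℝ (Fin d),
      ‖fderiv ℝ (A x) ξ₁ - fderiv ℝ (A x) ξ₂‖ ≤ LA * ‖ξ₁ - ξ₂‖)
    (gv gu w : Ω → EuclideanSpace ℝ (Fin d))
    (hgv : MemLp gv 2 μ) (hgu : MemLp gu 2 μ) (hw : MemLp w 2 μ)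
    (hint : Integrable (fun x =>
      (inner ℝ (A x (gv x) - (A x (gu x) + fderiv ℝ (A x) (gu x) (gv x - gu x)))
        (w x) : ℝ)) μ)
    (M : ℝ) (hM : ∀ᵐ x ∂μ, ‖gv x - gu x‖ ≤ M) :
    |∫ x, (inner ℝ (A x (gv x) - (A x (gu x) + fderiv ℝ (A x) (gu x) (gv x - gu x)))
        (w x) : ℝ) ∂μ|
      ≤ LA * M * Real.sqrt (∫ x, ‖gv x - gu x‖ ^ 2 ∂μ)
          * Real.sqrt (∫ x, ‖w x‖ ^ 2 ∂μ) :=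
  stmt8_general μ A LA hA hLip gv gu w hgv hgu hw M hM
end
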